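/- Let 0<q<1, let x₀ = x₀(q) be the unique positive zero of the q-digamma function ψ_q, let a > 1 and let u be a real number with a(u−1)+2 > x₀. Then [ψ_q(2)]^{a−1} ≤ [ψ_q(u+1)]^a / ψ_q(a(u−1)+2). -/

import Mathlib

open Real

/-- The q-digamma function for `0 < q < 1`:
`ψ_q(x) = -ln(1-q) + ln q * ∑_{k=1}^∞ q^{kx}/(1-q^k)`. -/
noncomputable def qDigamma (q x : ℝ) : ℝ :=
  -Real.log (1 - q) + Real.log q * ∑' k : ℕ, q ^ (((k : ℝ) + 1) * x) / (1 - q ^ (k + 1))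

noncomputable def qS (q x : ℝ) : ℝ := ∑' k : ℕ, q ^ (((k : ℝ) + 1) * x) / (1 - q ^ (k + 1))

lemma qDigamma_eq (q x : ℝ) : qDigamma q x = -Real.log (1 - q) + Real.log q * qS q x := rfl

lemma qden_pos {q : ℝ} (hq0 : 0 < q) (hq1 : q < 1) (k : ℕ) : 0 < 1 - q ^ (k + 1) := by
  have := pow_lt_one₀ hq0.le hq1 (n := k+1) (by omega)
  linarith

lemma qterm_eq {q : ℝ} (hq0 : 0 < q) (k : ℕ) (x : ℝ) :
    q ^ (((k : ℝ) + 1) * x) = (q ^ x) ^ (k + 1) := by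
  rw [mul_comm, Real.rpow_mul hq0.le]
  rw [show ((k : ℝ) + 1) = ((k + 1 : ℕ) : ℝ) by push_cast; ring, Real.rpow_natCast]

lemma qS_summable {q : ℝ} (hq0 : 0 < q) (hq1 : q < 1) {x : ℝ} (hx : 0 < x) :
    Summable (fun k : ℕ => q ^ (((k : ℝ) + 1) * x) / (1 - q ^ (k + 1))) := by
  have hr0 : 0 ≤ q ^ x := (Real.rpow_pos_of_pos hq0 x).le
  have hr1 : q ^ x < 1 := Real.rpow_lt_one hq0.le hq1 hx
  refine Summable.of_nonneg_of_le (fun k => ?_) (fun k => ?_)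
    ((summable_geometric_of_lt_one hr0 hr1).div_const (1 - q))
  · exact div_nonneg (Real.rpow_nonneg hq0.le _) (qden_pos hq0 hq1 k).le
  · rw [qterm_eq hq0]
    have h1 : (q ^ x) ^ (k + 1) ≤ (q ^ x) ^ k := pow_le_pow_of_le_one hr0 hr1.le (by omega)
    have h2 : 1 - q ≤ 1 - q ^ (k + 1) := by
      have : q ^ (k + 1) ≤ q := by
        calc q ^ (k+1) ≤ q ^ 1 := pow_le_pow_of_le_one hq0.le hq1.le (by omega)
        _ = q := pow_one q
      linarith
    exact div_le_div₀ (pow_nonneg hr0 _) h1 (by linarith) h2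

lemma qS_strict_anti {q : ℝ} (hq0 : 0 < q) (hq1 : q < 1) {x y : ℝ} (hx : 0 < x) (hxy : x < y) :
    qS q y < qS q x := by
  have key : ∀ k : ℕ, q ^ (((k : ℝ) + 1) * y) < q ^ (((k : ℝ) + 1) * x) := by
    intro k
    apply Real.rpow_lt_rpow_of_exponent_gt hq0 hq1
    have : (0:ℝ) < (k : ℝ) + 1 := by positivity
    nlinarith
  refine Summable.tsum_lt_tsum (i := 0) (fun k => ?_) ?_
    (qS_summable hq0 hq1 (hx.trans hxy)) (qS_summable hq0 hq1 hx)
  · exact (div_le_div_of_nonneg_right (key k).le (qden_pos hq0 hq1 k).le)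
  · exact div_lt_div_of_pos_right (key 0) (qden_pos hq0 hq1 0)

-- ψ(2) ≥ 0 : termwise bound
lemma qterm2_bound {q : ℝ} (hq0 : 0 < q) (hq1 : q < 1) (k : ℕ) :
    (-Real.log q) * (q ^ (((k : ℝ) + 1) * 2) / (1 - q ^ (k + 1))) ≤ q ^ (k+1) / ((k:ℝ)+1) := by
  have hqne : q ≠ 0 := hq0.ne'
  have hrw : q ^ (((k : ℝ) + 1) * 2) = q ^ (2*(k+1)) := by
    rw [show ((k : ℝ) + 1) * 2 = ((2*(k+1) : ℕ) : ℝ) by push_cast; ring, Real.rpow_natCast]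
  rw [hrw]
  -- -log q ≤ (1-q^2)/(2q)
  have key1 : -Real.log q ≤ (1 - q^2)/(2*q) := by
    have h1 : 0 < Real.log q⁻¹ := by
      rw [Real.log_inv]; linarith [Real.log_neg hq0 hq1]
    have h2 := Real.self_lt_sinh_iff.2 h1
    rw [Real.sinh_log (inv_pos.2 hq0), Real.log_inv] at h2
    have e : (q⁻¹ - (q⁻¹)⁻¹)/2 = (1-q^2)/(2*q) := by field_simp
    rw [e] at h2
    linarith [h2]
  -- (k+1) q^k (1-q) ≤ 1 - q^(k+1)
  have key2 : ((k:ℝ)+1) * q^k * (1-q) ≤ 1 - q^(k+1) := by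
    have h := one_add_mul_le_pow (show (-2:ℝ) ≤ 1/q - 1 by
      have := one_div_pos.2 hq0; linarith) (k+1)
    rw [show (1:ℝ)+(1/q-1) = 1/q by ring] at h
    have h2 := mul_le_mul_of_nonneg_right h (pow_pos hq0 (k+1)).le
    rw [← mul_pow, one_div_mul_cancel hqne, one_pow] at h2
    have e2 : (1 + ((k:ℕ)+1:ℝ)*(1/q-1)) * q^(k+1) = q^(k+1) + ((k:ℝ)+1)*q^k*(1-q) := by
      field_simp
      ring
    push_cast at h2 e2
    rw [e2] at h2
    linarith
  have hD := qden_pos hq0 hq1 k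
  have hden2 : (0:ℝ) < ((k:ℝ)+1) * q^k * (1-q) := by
    apply mul_pos (mul_pos (by positivity) (pow_pos hq0 k)) (by linarith)
  have hnum : (0:ℝ) ≤ q ^ (2*(k+1)) := by positivity
  have hc : (0:ℝ) ≤ (1-q^2)/(2*q) := by
    have : q^2 < 1 := pow_lt_one₀ hq0.le hq1 (by omega)
    apply div_nonneg (by linarith) (by positivity)
  calc (-Real.log q) * (q ^ (2*(k+1)) / (1 - q ^ (k + 1)))
      ≤ ((1-q^2)/(2*q)) * (q ^ (2*(k+1)) / (1 - q ^ (k + 1))) := by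
        exact mul_le_mul_of_nonneg_right key1 (div_nonneg hnum hD.le)
    _ ≤ ((1-q^2)/(2*q)) * (q ^ (2*(k+1)) / (((k:ℝ)+1) * q^k * (1-q))) :=
        mul_le_mul_of_nonneg_left (div_le_div_of_nonneg_left hnum hden2 key2) hc
    _ = ((1+q)/2) * (q^(k+1) / ((k:ℝ)+1)) := by
        have h1q : (1:ℝ) - q ≠ 0 := (by linarith : (0:ℝ) < 1 - q).ne'
        field_simp
        ring
    _ ≤ 1 * (q^(k+1) / ((k:ℝ)+1)) := by
        apply mul_le_mul_of_nonneg_right (by linarith) (by positivity)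
    _ = q^(k+1) / ((k:ℝ)+1) := one_mul _

lemma qDigamma_two_nonneg {q : ℝ} (hq0 : 0 < q) (hq1 : q < 1) : 0 ≤ qDigamma q 2 := by
  have hlogS : HasSum (fun n : ℕ => q ^ (n+1) / ((n:ℝ)+1)) (-Real.log (1-q)) := by
    have := hasSum_pow_div_log_of_abs_lt_one (x := q) (by rw [abs_of_pos hq0]; exact hq1)
    exact this
  have hs2 := qS_summable hq0 hq1 (x := 2) (by norm_num)
  have hmul : (-Real.log q) * qS q 2
      = ∑' k : ℕ, (-Real.log q) * (q ^ (((k : ℝ) + 1) * 2) / (1 - q ^ (k + 1))) := by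
    rw [qS, ← tsum_mul_left]
  have hle : (-Real.log q) * qS q 2 ≤ -Real.log (1-q) := by
    rw [hmul, ← hlogS.tsum_eq]
    exact Summable.tsum_le_tsum (fun k => qterm2_bound hq0 hq1 k) (hs2.mul_left _) hlogS.summable
  rw [qDigamma_eq]
  nlinarith [hle]

lemma qDigamma_pos {q x₀ : ℝ} (hq0 : 0 < q) (hq1 : q < 1) (hx₀ : 0 < x₀)
    (hzero : qDigamma q x₀ = 0) {y : ℝ} (hy : x₀ < y) : 0 < qDigamma q y := by
  have hL : Real.log q < 0 := Real.log_neg hq0 hq1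
  have hS := qS_strict_anti hq0 hq1 hx₀ hy
  rw [qDigamma_eq] at hzero ⊢
  nlinarith [hS, hL]

lemma qS_midpoint {q : ℝ} (hq0 : 0 < q) (hq1 : q < 1) {x y w : ℝ}
    (hx : 0 < x) (hy : 0 < y) (hw0 : 0 < w) (hw1 : w < 1) :
    qS q (w*x + (1-w)*y) ≤ w * qS q x + (1-w) * qS q y := by
  have hm : 0 < w*x + (1-w)*y := by nlinarith
  have hsx := qS_summable hq0 hq1 hx
  have hsy := qS_summable hq0 hq1 hy
  have key : ∀ k : ℕ,
      q ^ (((k : ℝ) + 1) * (w*x + (1-w)*y)) / (1 - q ^ (k + 1))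
      ≤ w * (q ^ (((k : ℝ) + 1) * x) / (1 - q ^ (k + 1)))
        + (1-w) * (q ^ (((k : ℝ) + 1) * y) / (1 - q ^ (k + 1))) := by
    intro k
    set c : ℝ := (k : ℝ) + 1 with hc
    have hD := qden_pos hq0 hq1 k
    have hsplit : q ^ (c * (w*x + (1-w)*y)) = (q ^ (c*x)) ^ w * (q ^ (c*y)) ^ (1-w) := by
      rw [show c * (w*x + (1-w)*y) = (c*x)*w + (c*y)*(1-w) by ring, Real.rpow_add hq0,
        Real.rpow_mul hq0.le (c*x) w, Real.rpow_mul hq0.le (c*y) (1-w)]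
    have hAM := Real.geom_mean_le_arith_mean2_weighted hw0.le (by linarith : (0:ℝ) ≤ 1-w)
      (Real.rpow_nonneg hq0.le (c*x)) (Real.rpow_nonneg hq0.le (c*y)) (by ring)
    rw [hsplit]
    have := div_le_div_of_nonneg_right hAM hD.le
    calc (q ^ (c*x)) ^ w * (q ^ (c*y)) ^ (1-w) / (1 - q ^ (k + 1))
        ≤ (w * q ^ (c*x) + (1-w) * q ^ (c*y)) / (1 - q ^ (k + 1)) := this
      _ = w * (q ^ (c*x) / (1 - q ^ (k + 1))) + (1-w) * (q ^ (c*y) / (1 - q ^ (k + 1))) := by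
          ring
  calc qS q (w*x + (1-w)*y)
      ≤ ∑' k : ℕ, (w * (q ^ (((k : ℝ) + 1) * x) / (1 - q ^ (k + 1)))
        + (1-w) * (q ^ (((k : ℝ) + 1) * y) / (1 - q ^ (k + 1)))) :=
        Summable.tsum_le_tsum key (qS_summable hq0 hq1 hm) ((hsx.mul_left w).add (hsy.mul_left (1-w)))
    _ = w * qS q x + (1-w) * qS q y := by
        rw [Summable.tsum_add (hsx.mul_left w) (hsy.mul_left (1-w)), tsum_mul_left, tsum_mul_left]; rfl

lemma qDigamma_concave {q : ℝ} (hq0 : 0 < q) (hq1 : q < 1) {x y w : ℝ}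
    (hx : 0 < x) (hy : 0 < y) (hw0 : 0 < w) (hw1 : w < 1) :
    w * qDigamma q x + (1-w) * qDigamma q y ≤ qDigamma q (w*x + (1-w)*y) := by
  have hL : Real.log q < 0 := Real.log_neg hq0 hq1
  have hS := qS_midpoint hq0 hq1 hx hy hw0 hw1
  simp only [qDigamma_eq]
  nlinarith [hS, hL]

theorem stmt10 (q x₀ a u : ℝ) (hq0 : 0 < q) (hq1 : q < 1)
    (hx₀ : 0 < x₀) (hzero : qDigamma q x₀ = 0)
    (huniq : ∀ y : ℝ, 0 < y → qDigamma q y = 0 → y = x₀)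
    (ha : 1 < a) (hu : a * (u - 1) + 2 > x₀) :
    (qDigamma q 2) ^ (a - 1) ≤ (qDigamma q (u + 1)) ^ a / qDigamma q (a * (u - 1) + 2) := by
  have ha0 : 0 < a := by linarith
  have hw0 : 0 < 1/a := by positivity
  have hw1 : 1/a < 1 := by rw [div_lt_one ha0]; exact ha
  have hp0 : 0 < a * (u - 1) + 2 := hx₀.trans hu
  have hA : 0 < qDigamma q (a * (u - 1) + 2) := qDigamma_pos hq0 hq1 hx₀ hzero hu
  have hB : 0 ≤ qDigamma q 2 := qDigamma_two_nonneg hq0 hq1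
  have hmid : (1/a) * (a * (u - 1) + 2) + (1 - 1/a) * 2 = u + 1 := by field_simp; ring
  have hconc := qDigamma_concave hq0 hq1 (x := a * (u - 1) + 2) (y := 2) hp0 two_pos hw0 hw1
  rw [hmid] at hconc
  set A := qDigamma q (a * (u - 1) + 2) with hAdef
  set B := qDigamma q 2 with hBdef
  set C := qDigamma q (u + 1) with hCdef
  have hAMGM : A ^ (1/a) * B ^ (1 - 1/a) ≤ (1/a) * A + (1 - 1/a) * B :=
    Real.geom_mean_le_arith_mean2_weighted hw0.le (by linarith) hA.le hB (by ring)
  have hC : A ^ (1/a) * B ^ (1 - 1/a) ≤ C := hAMGM.trans hconc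
  have hbase : 0 ≤ A ^ (1/a) * B ^ (1 - 1/a) :=
    mul_nonneg (Real.rpow_nonneg hA.le _) (Real.rpow_nonneg hB _)
  have hpow := Real.rpow_le_rpow hbase hC (by linarith : (0:ℝ) ≤ a)
  have key : (A ^ (1/a) * B ^ (1 - 1/a)) ^ a = A * B ^ (a - 1) := by
    rw [Real.mul_rpow (Real.rpow_nonneg hA.le _) (Real.rpow_nonneg hB _),
      ← Real.rpow_mul hA.le, ← Real.rpow_mul hB,
      show 1/a * a = 1 by field_simp, show (1 - 1/a) * a = a - 1 by field_simp,
      Real.rpow_one]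
  rw [key] at hpow
  rw [le_div_iff₀ hA]
  calc B ^ (a-1) * A = A * B ^ (a-1) := mul_comm _ _
    _ ≤ C ^ a := hpow
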